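/- arXiv:2203.10888 — 2 statements merged into one kernel-verified Lean document; each statement's English description precedes it below -/
import Mathlib

section
/- Let p be a prime, let W be an l × n matrix over Z_p, and let I ⊆ {1,…,l} be a set of row indices such that e₁ = (1,0,…,0) does not lie in the Z_p-span of the rows {W_i : i ∈ I}. Then for every vector v ∈ Z_p^n and every s′ ∈ Z_p there exists a vector v′ ∈ Z_p^n with first coordinate v′₁ = s′ and (W·v′)_i = (W·v)_i for every i ∈ I. In other words, the shares held by an unauthorized set of attributes are consistent with every possible value of the secret. -/
/-!
Since `e₁` lies outside the span of the rows `W i`, `i ∈ I`, the zero functional on that span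
extends to one sending `e₁` to `1`; as a vector, it is a `u` with `e₁ ⬝ᵥ u = 1` orthogonal to
every such row.
Moving `v` along `u` then changes the secret arbitrarily without changing the shares on `I`.
-/

open Matrix Submodule

variable {K m n : Type*} [Field K] [Fintype n]

theorem exists_dotProduct_eq_one_of_notMem_span [DecidableEq n] {S : Set (n → K)} {x : n → K}
    (hx : x ∉ span K S) : ∃ u : n → K, x ⬝ᵥ u = 1 ∧ ∀ r ∈ S, r ⬝ᵥ u = 0 := by
  obtain ⟨f, hf_span, hf_x⟩ := LinearMap.exists_extend_of_notMem (0 : span K S →ₗ[K] K) hx 1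
  have hf : ∀ y, y ⬝ᵥ (dotProductEquiv K n).symm f = f y := fun y ↦ by
    rw [dotProduct_comm, ← dotProductEquiv_apply_apply, LinearEquiv.apply_symm_apply]
  refine ⟨(dotProductEquiv K n).symm f, by rw [hf, hf_x], fun r hr ↦ ?_⟩
  simpa [hf] using congr($hf_span ⟨r, subset_span hr⟩)

theorem exists_mulVec_eqOn_of_notMem_span_rows (W : Matrix m n K) {I : Set m} {x : n → K}
    (hx : x ∉ span K {r | ∃ i ∈ I, r = W i}) (v : n → K) (c : K) :
    ∃ v' : n → K, x ⬝ᵥ v' = c ∧ ∀ i ∈ I, (W *ᵥ v') i = (W *ᵥ v) i := by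
  classical
  obtain ⟨u, hxu, hWu⟩ := exists_dotProduct_eq_one_of_notMem_span hx
  refine ⟨v + (c - x ⬝ᵥ v) • u, ?_, fun i hi ↦ ?_⟩
  · rw [dotProduct_add, dotProduct_smul, hxu, smul_eq_mul, mul_one, add_sub_cancel]
  · have hWu_i : (W *ᵥ u) i = 0 := hWu _ ⟨i, hi, rfl⟩
    rw [mulVec_add, mulVec_smul, Pi.add_apply, Pi.smul_apply, hWu_i, smul_zero, add_zero]

/-- Privacy of an LSSS: if `e₁` is not in the span of the rows `{W i : i ∈ I}`,
then for every vector `v` and every secret `s'` there is a vector `v'` with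
first coordinate `s'` producing exactly the same shares on `I`.  Thus the
shares held by an unauthorized set are consistent with every possible secret. -/
theorem lsss_unauthorized_consistent {p l n : ℕ} [Fact p.Prime] [NeZero n]
    (W : Matrix (Fin l) (Fin n) (ZMod p)) (I : Finset (Fin l))
    (hI : (Pi.single 0 1 : Fin n → ZMod p) ∉
      Submodule.span (ZMod p) {r : Fin n → ZMod p | ∃ i ∈ I, r = W i}) :
    ∀ (v : Fin n → ZMod p) (s' : ZMod p),
      ∃ v' : Fin n → ZMod p, v' 0 = s' ∧ ∀ i ∈ I, W.mulVec v' i = W.mulVec v i := by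
  intro v s'
  obtain ⟨v', hv'0, hv'I⟩ :=
    exists_mulVec_eqOn_of_notMem_span_rows W (I := (I : Set (Fin l))) hI v s'
  rw [single_dotProduct, one_mul] at hv'0
  exact ⟨v', hv'0, hv'I⟩
end

section
/- Let p be a prime, let W be an l × n matrix over Z_p, and let I ⊆ {1,…,l} be such that e₁ = (1,0,…,0) does not lie in the Z_p-span of the rows {W_i : i ∈ I}. Then for every tuple of share values λ = (λ_i)_{i∈I} and every pair of secrets s, s′ ∈ Z_p, the number of vectors v ∈ Z_p^n with v₁ = s and (W·v)_i = λ_i for all i ∈ I equals the number of vectors v′ ∈ Z_p^n with v′₁ = s′ and (W·v′)_i = λ_i for all i ∈ I. Hence the share distribution seen by an unauthorized set is identical for all secrets. -/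
/-- Perfect privacy of an LSSS: if `e₁` is not in the span of the rows
`{W i : i ∈ I}`, then for every tuple of share values `lam` and every pair of
secrets `s, s'`, the number of vectors `v` with `v 0 = s` producing the shares
`lam` on `I` equals the number of vectors `v'` with `v' 0 = s'` producing the
same shares.  Hence the share distribution seen by an unauthorized set is
identical for all secrets. -/
theorem lsss_unauthorized_count {p l n : ℕ} [Fact p.Prime] [NeZero n]
    (W : Matrix (Fin l) (Fin n) (ZMod p)) (I : Finset (Fin l))
    (hI : (Pi.single 0 1 : Fin n → ZMod p) ∉
      Submodule.span (ZMod p) {r : Fin n → ZMod p | ∃ i ∈ I, r = W i}) :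
    ∀ (lam : Fin l → ZMod p) (s s' : ZMod p),
      Set.ncard {v : Fin n → ZMod p | v 0 = s ∧ ∀ i ∈ I, W.mulVec v i = lam i} =
      Set.ncard {v' : Fin n → ZMod p | v' 0 = s' ∧ ∀ i ∈ I, W.mulVec v' i = lam i} := by
  intro lam s s'
  obtain ⟨f, hf1, hf2⟩ :=
    Submodule.exists_dual_map_eq_bot_of_notMem hI inferInstance
  set c : ZMod p := f (Pi.single 0 1) with hc
  set w : Fin n → ZMod p := fun j => c⁻¹ * f (Pi.single j 1) with hw
  have hfrow : ∀ i ∈ I, f (W i) = 0 := by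
    intro i hi
    have : f (W i) ∈ Submodule.map f
        (Submodule.span (ZMod p) {r : Fin n → ZMod p | ∃ i ∈ I, r = W i}) :=
      Submodule.mem_map_of_mem (Submodule.subset_span ⟨i, hi, rfl⟩)
    rw [hf2] at this
    simpa using this
  have hfx : ∀ x : Fin n → ZMod p, f x = ∑ j, x j * f (Pi.single j 1) := by
    intro x
    conv_lhs => rw [show x = ∑ j, x j • (Pi.single j 1 : Fin n → ZMod p) by
      ext k; simp [Pi.single_apply, Finset.sum_apply]]
    simp [mul_comm]
  have hw0 : w 0 = 1 := by
    simp only [hw]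
    exact inv_mul_cancel₀ hf1
  have hwrow : ∀ i ∈ I, dotProduct (W i) w = 0 := by
    intro i hi
    have : dotProduct (W i) w = c⁻¹ * f (W i) := by
      rw [hfx (W i), dotProduct, Finset.mul_sum]
      apply Finset.sum_congr rfl
      intro j _
      simp [hw]; ring
    rw [this, hfrow i hi, mul_zero]
  -- translation bijection
  set d : ZMod p := s' - s with hd
  have key : (fun v : Fin n → ZMod p => v + d • w) ''
      {v : Fin n → ZMod p | v 0 = s ∧ ∀ i ∈ I, W.mulVec v i = lam i}
      = {v' : Fin n → ZMod p | v' 0 = s' ∧ ∀ i ∈ I, W.mulVec v' i = lam i} := by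
    ext v'
    constructor
    · rintro ⟨v, ⟨hv0, hvI⟩, rfl⟩
      constructor
      · simp [hv0, hw0, hd]
      · intro i hi
        rw [Matrix.mulVec_add, Matrix.mulVec_smul]
        have : W.mulVec w i = 0 := hwrow i hi
        simp [this, hvI i hi]
    · rintro ⟨hv0, hvI⟩
      refine ⟨v' - d • w, ⟨?_, ?_⟩, sub_add_cancel _ _⟩
      · simp [hv0, hw0, hd]
      · intro i hi
        rw [Matrix.mulVec_sub, Matrix.mulVec_smul]
        have : W.mulVec w i = 0 := hwrow i hi
        simp [this, hvI i hi]
  rw [← key]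
  exact (Set.ncard_image_of_injective _ (add_left_injective (d • w))).symm
end
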